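/- If (d₁,…,d_{n+1}) is an exchangeable vector of real random variables, then for any k ∈ {1,…,n+1}, P(#{i : dᵢ ≥ d_{n+1}} ≤ k) ≤ k/(n+1). -/
import Mathlib


open MeasureTheory ENNReal

namespace Stmt19Aux

/-- The set of vectors whose `j`-th coordinate is among the top `k` (ties counted). -/
def S (n k : ℕ) (j : Fin (n + 1)) : Set (Fin (n + 1) → ℝ) :=
  {x | (Finset.univ.filter fun i : Fin (n + 1) => x j ≤ x i).card ≤ k}

lemma measurable_card (n : ℕ) (j : Fin (n + 1)) :
    Measurable fun x : Fin (n + 1) → ℝ =>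
      (Finset.univ.filter fun i : Fin (n + 1) => x j ≤ x i).card := by
  have hrw : (fun x : Fin (n + 1) → ℝ =>
      (Finset.univ.filter fun i : Fin (n + 1) => x j ≤ x i).card)
      = fun x => ∑ i : Fin (n + 1), if x j ≤ x i then 1 else 0 := by
    funext x
    rw [Finset.card_filter]
  rw [hrw]
  exact Finset.measurable_sum _ fun i _ =>
    Measurable.ite (measurableSet_le (measurable_pi_apply j) (measurable_pi_apply i))
      measurable_const measurable_const

lemma measurableSet_S (n k : ℕ) (j : Fin (n + 1)) : MeasurableSet (S n k j) :=
  measurable_card n j measurableSet_Iic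

/-- Pointwise: at most `k` coordinates can be among the top `k`. -/
lemma card_mem_S_le (n k : ℕ) (x : Fin (n + 1) → ℝ) :
    (Finset.univ.filter fun j : Fin (n + 1) =>
      (Finset.univ.filter fun i : Fin (n + 1) => x j ≤ x i).card ≤ k).card ≤ k := by
  classical
  set T := Finset.univ.filter fun j : Fin (n + 1) =>
      (Finset.univ.filter fun i : Fin (n + 1) => x j ≤ x i).card ≤ k with hT
  rcases T.eq_empty_or_nonempty with h | h
  · simp [h]
  · obtain ⟨j₀, hj₀, hmin⟩ := T.exists_min_image x h
    have hj₀S : (Finset.univ.filter fun i : Fin (n + 1) => x j₀ ≤ x i).card ≤ k :=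
      (Finset.mem_filter.mp hj₀).2
    calc T.card ≤ (Finset.univ.filter fun i : Fin (n + 1) => x j₀ ≤ x i).card := by
          apply Finset.card_le_card
          intro i hi
          simp only [Finset.mem_filter, Finset.mem_univ, true_and]
          exact hmin i hi
      _ ≤ k := hj₀S

lemma filter_perm_card (n : ℕ) (π : Equiv.Perm (Fin (n + 1))) (q : Fin (n + 1) → Prop)
    [DecidablePred q] :
    (Finset.univ.filter fun i => q (π i)).card = (Finset.univ.filter q).card := by
  apply Finset.card_bij' (fun i _ => π i) (fun i _ => π.symm i)
  · intro a ha
    simp only [Finset.mem_filter, Finset.mem_univ, true_and] at ha ⊢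
    exact ha
  · intro a ha
    simp only [Finset.mem_filter, Finset.mem_univ, true_and] at ha ⊢
    simpa using ha
  · intro a _; simp
  · intro a _; simp

end Stmt19Aux

open Stmt19Aux

/-- If `(d₁,…,d_{n+1})` is an exchangeable vector of real random variables and
`N = #{i : dᵢ ≥ d_{n+1}}`, then `P(N ≤ k) ≤ k/(n+1)` for each integer `k ≥ 1`. -/
theorem stmt_19 {Ω : Type*} [MeasurableSpace Ω] (P : Measure Ω) [IsProbabilityMeasure P]
    (n : ℕ) (d : Ω → Fin (n + 1) → ℝ) (hmeas : Measurable d)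
    (hexch : ∀ π : Equiv.Perm (Fin (n + 1)),
      Measure.map (fun ω => d ω ∘ π) P = Measure.map d P)
    (k : ℕ) (hk : 1 ≤ k) :
    (P {ω | (Finset.univ.filter fun i : Fin (n + 1) =>
        d ω (Fin.last n) ≤ d ω i).card ≤ k}).toReal ≤ k / (n + 1) := by
  classical
  set A : Fin (n + 1) → Set Ω := fun j => d ⁻¹' S n k j with hA
  have hAmeas : ∀ j, MeasurableSet (A j) := fun j => hmeas (measurableSet_S n k j)
  -- Step 1: all coordinates have the same probability
  have hsame : ∀ j : Fin (n + 1), P (A j) = P (A (Fin.last n)) := by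
    intro j
    set π : Equiv.Perm (Fin (n + 1)) := Equiv.swap j (Fin.last n) with hπ
    have hm : Measurable fun ω => d ω ∘ π :=
      measurable_pi_lambda _ fun i => (measurable_pi_apply (π i)).comp hmeas
    have hpre : (fun ω => d ω ∘ π) ⁻¹' S n k (Fin.last n) = A j := by
      ext ω
      simp only [Set.mem_preimage, hA, S, Set.mem_setOf_eq, Function.comp_apply]
      have hπlast : π (Fin.last n) = j := Equiv.swap_apply_right _ _
      simp only [hπlast]
      rw [filter_perm_card n π (fun i => d ω j ≤ d ω i)]
    calc P (A j) = P ((fun ω => d ω ∘ π) ⁻¹' S n k (Fin.last n)) := by rw [hpre]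
      _ = Measure.map (fun ω => d ω ∘ π) P (S n k (Fin.last n)) :=
          (Measure.map_apply hm (measurableSet_S n k (Fin.last n))).symm
      _ = Measure.map d P (S n k (Fin.last n)) := by rw [hexch π]
      _ = P (A (Fin.last n)) := Measure.map_apply hmeas (measurableSet_S n k (Fin.last n))
  -- Step 2: the sum of the probabilities is at most k
  have hsum : ∑ j : Fin (n + 1), P (A j) ≤ (k : ℝ≥0∞) := by
    have h1 : ∑ j : Fin (n + 1), P (A j)
        = ∫⁻ ω, ∑ j : Fin (n + 1), (A j).indicator (fun _ => (1 : ℝ≥0∞)) ω ∂P := by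
      rw [lintegral_finset_sum _ fun j _ => measurable_const.indicator (hAmeas j)]
      refine Finset.sum_congr rfl fun j _ => ?_
      rw [lintegral_indicator_const (hAmeas j), one_mul]
    rw [h1]
    calc ∫⁻ ω, ∑ j : Fin (n + 1), (A j).indicator (fun _ => (1 : ℝ≥0∞)) ω ∂P
        ≤ ∫⁻ _, (k : ℝ≥0∞) ∂P := by
          apply lintegral_mono
          intro ω
          dsimp only
          have heq : ∑ j : Fin (n + 1), (A j).indicator (fun _ => (1 : ℝ≥0∞)) ω
              = ((Finset.univ.filter fun j : Fin (n + 1) =>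
                  (Finset.univ.filter fun i : Fin (n + 1) =>
                    d ω j ≤ d ω i).card ≤ k).card : ℝ≥0∞) := by
            rw [Finset.card_filter, Nat.cast_sum]
            refine Finset.sum_congr rfl fun j _ => ?_
            rw [Set.indicator_apply]
            simp only [apply_ite (Nat.cast : ℕ → ℝ≥0∞), Nat.cast_one, Nat.cast_zero]
            exact if_congr Iff.rfl rfl rfl
          rw [heq]
          exact_mod_cast card_mem_S_le n k (d ω)
      _ = (k : ℝ≥0∞) := by simp
  -- combine
  have hcount : ((n : ℝ≥0∞) + 1) * P (A (Fin.last n)) ≤ (k : ℝ≥0∞) := by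
    calc ((n : ℝ≥0∞) + 1) * P (A (Fin.last n))
        = ∑ _j : Fin (n + 1), P (A (Fin.last n)) := by
          rw [Finset.sum_const, Finset.card_univ, Fintype.card_fin]
          push_cast
          ring
      _ = ∑ j : Fin (n + 1), P (A j) := by
          exact Finset.sum_congr rfl fun j _ => (hsame j).symm
      _ ≤ (k : ℝ≥0∞) := hsum
  have hdiv : P (A (Fin.last n)) ≤ (k : ℝ≥0∞) / ((n : ℝ≥0∞) + 1) := by
    have hne : ((n : ℝ≥0∞) + 1) ≠ 0 := by simp
    have hnt : ((n : ℝ≥0∞) + 1) ≠ ⊤ :=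
      ENNReal.add_ne_top.mpr ⟨ENNReal.natCast_ne_top n, one_ne_top⟩
    rw [ENNReal.le_div_iff_mul_le (Or.inl hne) (Or.inl hnt), mul_comm]
    exact hcount
  have hset : {ω | (Finset.univ.filter fun i : Fin (n + 1) =>
      d ω (Fin.last n) ≤ d ω i).card ≤ k} = A (Fin.last n) := rfl
  rw [hset]
  have hcast : ((n : ℝ≥0∞) + 1) = ((n + 1 : ℕ) : ℝ≥0∞) := by push_cast; ring
  calc (P (A (Fin.last n))).toReal
      ≤ ((k : ℝ≥0∞) / ((n : ℝ≥0∞) + 1)).toReal := by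
        apply ENNReal.toReal_mono _ hdiv
        exact (ENNReal.div_lt_top (ENNReal.natCast_ne_top k) (by simp)).ne
    _ = (k : ℝ) / ((n : ℝ) + 1) := by
        rw [ENNReal.toReal_div, hcast, ENNReal.toReal_natCast, ENNReal.toReal_natCast]
        push_cast
        ring
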